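/- Fix a right-of-way parameter p ∈ (0,1) and nonnegative reals D₄, D₅ and S₆ with S₆ < D₄ + D₅, and suppose that the point (p·S₆, (1−p)·S₆) is not feasible, i.e. p·S₆ > D₄ or (1−p)·S₆ > D₅. Let K = {(x,y) ∈ ℝ² : 0 ≤ x ≤ D₄, 0 ≤ y ≤ D₅, x + y ≤ S₆}, let Ω be the set of maximizers of x + y over K, let R = {(x,y) ∈ ℝ² : x ≥ 0, y ≥ 0, (1−p)·x = p·y}, and let (x*, y*) be the unique point of Ω minimizing the Euclidean distance to R. Then x* + y* = S₆ and exactly one of the following holds: either x* = D₄ < p·S₆ and y* = S₆ − D₄ > (1−p)·S₆, or y* = D₅ < (1−p)·S₆ and x* = S₆ − D₅ > p·S₆. -/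

import Mathlib

/-- The feasible set of the merge junction model. -/
def mergeK (D4 D5 S6 : ℝ) : Set (ℝ × ℝ) :=
  {z | 0 ≤ z.1 ∧ z.1 ≤ D4 ∧ 0 ≤ z.2 ∧ z.2 ≤ D5 ∧ z.1 + z.2 ≤ S6}

/-- The set of maximizers of the total flow `x + y` over the feasible set. -/
def mergeOmega (D4 D5 S6 : ℝ) : Set (ℝ × ℝ) :=
  {z ∈ mergeK D4 D5 S6 | ∀ w ∈ mergeK D4 D5 S6, w.1 + w.2 ≤ z.1 + z.2}

/-- The priority ray `R = {(x,y) : x ≥ 0, y ≥ 0, (1 − p)·x = p·y}`. -/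
def priorityRay (p : ℝ) : Set (ℝ × ℝ) :=
  {z | 0 ≤ z.1 ∧ 0 ≤ z.2 ∧ (1 - p) * z.1 = p * z.2}

/-- The Euclidean distance between two points of the plane. -/
noncomputable def euclDist (z w : ℝ × ℝ) : ℝ :=
  Real.sqrt ((z.1 - w.1) ^ 2 + (z.2 - w.2) ^ 2)

/-- The Euclidean distance from a point to a set, `inf {‖z − w‖₂ : w ∈ R}`. -/
noncomputable def euclDistToSet (z : ℝ × ℝ) (R : Set (ℝ × ℝ)) : ℝ :=
  sInf (euclDist z '' R)

/-!
Since `S₆ < D₄ + D₅`, the maximizers `Ω` form the segment of `K` on the line `x + y = S₆`.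
There the distance of `(x, y)` to the ray `R` is `|x − p·S₆| / √(p² + (1 − p)²)`, because the
signed gap `(1 − p)·x − p·y` to the line through `R` equals `x − p·S₆` on that segment.
The merge solution is therefore the endpoint of the segment nearest to the infeasible priority
point `(p·S₆, (1 − p)·S₆)`. Both alternatives cannot hold at once, since together they would
give `D₄ + D₅ < S₆`.
-/

section PriorityRay

variable {p : ℝ}

lemma abs_priorityGap_le_sqrt_mul_euclDist (z : ℝ × ℝ) {r : ℝ × ℝ} (hr : r ∈ priorityRay p) :
    |(1 - p) * z.1 - p * z.2| ≤ √(p ^ 2 + (1 - p) ^ 2) * euclDist z r := by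
  obtain ⟨-, -, hr⟩ := hr
  have hgap : (1 - p) * z.1 - p * z.2 = (1 - p) * (z.1 - r.1) - p * (z.2 - r.2) := by
    linear_combination hr
  -- Cauchy–Schwarz for the vectors `(1 − p, −p)` and `z − r`
  have hcs : ((1 - p) * z.1 - p * z.2) ^ 2
      ≤ (p ^ 2 + (1 - p) ^ 2) * ((z.1 - r.1) ^ 2 + (z.2 - r.2) ^ 2) := by
    rw [hgap]
    nlinarith [sq_nonneg ((1 - p) * (z.2 - r.2) + p * (z.1 - r.1))]
  calc |(1 - p) * z.1 - p * z.2| = √(((1 - p) * z.1 - p * z.2) ^ 2) := (Real.sqrt_sq_eq_abs _).symm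
    _ ≤ √((p ^ 2 + (1 - p) ^ 2) * ((z.1 - r.1) ^ 2 + (z.2 - r.2) ^ 2)) := Real.sqrt_le_sqrt hcs
    _ = √(p ^ 2 + (1 - p) ^ 2) * euclDist z r := Real.sqrt_mul' _ (by positivity)

-- The foot of the perpendicular from `z` to the line `(1 − p)·x = p·y` lies on the ray
-- because `z` lies in the closed first quadrant.
lemma isLeast_euclDist_priorityRay (hp0 : 0 ≤ p) (hp1 : p ≤ 1) {z : ℝ × ℝ}
    (hz1 : 0 ≤ z.1) (hz2 : 0 ≤ z.2) :
    IsLeast (euclDist z '' priorityRay p)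
      (|(1 - p) * z.1 - p * z.2| / √(p ^ 2 + (1 - p) ^ 2)) := by
  have hN0 : 0 < p ^ 2 + (1 - p) ^ 2 := by nlinarith
  set N := p ^ 2 + (1 - p) ^ 2
  set c := (1 - p) * z.1 - p * z.2 with hc
  set t := (p * z.1 + (1 - p) * z.2) / N with ht
  have ht0 : 0 ≤ t := div_nonneg (by nlinarith) hN0.le
  refine ⟨⟨(t * p, t * (1 - p)), ⟨by positivity, mul_nonneg ht0 (by linarith), by ring⟩, ?_⟩, ?_⟩
  · have h1 : z.1 - t * p = (1 - p) * c / N := by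
      rw [ht, hc]; field_simp; ring
    have h2 : z.2 - t * (1 - p) = -(p * c) / N := by
      rw [ht, hc]; field_simp; ring
    have hsq : ((1 - p) * c / N) ^ 2 + (-(p * c) / N) ^ 2 = c ^ 2 / N := by
      field_simp; ring
    simp only [euclDist]
    rw [h1, h2, hsq, Real.sqrt_div (sq_nonneg c), Real.sqrt_sq_eq_abs]
  · rintro _ ⟨r, hr, rfl⟩
    rw [div_le_iff₀ (Real.sqrt_pos.mpr hN0), mul_comm]
    exact abs_priorityGap_le_sqrt_mul_euclDist z hr

lemma euclDistToSet_priorityRay (hp0 : 0 ≤ p) (hp1 : p ≤ 1) {z : ℝ × ℝ}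
    (hz1 : 0 ≤ z.1) (hz2 : 0 ≤ z.2) :
    euclDistToSet z (priorityRay p)
      = |(1 - p) * z.1 - p * z.2| / √(p ^ 2 + (1 - p) ^ 2) :=
  (isLeast_euclDist_priorityRay hp0 hp1 hz1 hz2).csInf_eq

lemma euclDistToSet_priorityRay_of_add_eq (hp0 : 0 ≤ p) (hp1 : p ≤ 1) {z : ℝ × ℝ} {s : ℝ}
    (hz1 : 0 ≤ z.1) (hz2 : 0 ≤ z.2) (hzs : z.1 + z.2 = s) :
    euclDistToSet z (priorityRay p) = |z.1 - p * s| / √(p ^ 2 + (1 - p) ^ 2) := by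
  rw [euclDistToSet_priorityRay hp0 hp1 hz1 hz2, ← hzs]
  ring_nf

end PriorityRay

lemma mergeOmega_eq {D4 D5 S6 : ℝ} (hD4 : 0 ≤ D4) (hD5 : 0 ≤ D5) (hS6 : 0 ≤ S6)
    (hsum : S6 ≤ D4 + D5) :
    mergeOmega D4 D5 S6 = {z ∈ mergeK D4 D5 S6 | z.1 + z.2 = S6} := by
  have hw : (min D4 S6, S6 - min D4 S6) ∈ mergeK D4 D5 S6 :=
    ⟨le_min hD4 hS6, min_le_left _ _, sub_nonneg.2 (min_le_right _ _),
      by rcases min_choice D4 S6 with h | h <;> simp only [h] <;> linarith, by simp⟩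
  ext z
  constructor
  · rintro ⟨hz, hmax⟩
    exact ⟨hz, le_antisymm hz.2.2.2.2 (by simpa using hmax _ hw)⟩
  · rintro ⟨hz, hzS⟩
    exact ⟨hz, fun w hw => hzS ▸ hw.2.2.2.2⟩

/-- In the case where the priority rule is incompatible with flow maximization
(`(p·S₆, (1−p)·S₆)` infeasible and `S₆ < D₄ + D₅`), the merge solution
`(x*, y*)` satisfies `x* + y* = S₆` and exactly one of:
`x* = D₄ < p·S₆` with `y* = S₆ − D₄ > (1−p)·S₆`, or
`y* = D₅ < (1−p)·S₆` with `x* = S₆ − D₅ > p·S₆`. -/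
theorem merge_solution_incompatible_case
    (p D4 D5 S6 : ℝ) (hp0 : 0 < p) (hp1 : p < 1)
    (hD4 : 0 ≤ D4) (hD5 : 0 ≤ D5) (hS6 : 0 ≤ S6)
    (hsum : S6 < D4 + D5)
    (hinfeas : D4 < p * S6 ∨ D5 < (1 - p) * S6)
    (z : ℝ × ℝ) (hz : z ∈ mergeOmega D4 D5 S6)
    (hmin : ∀ w ∈ mergeOmega D4 D5 S6,
      euclDistToSet z (priorityRay p) ≤ euclDistToSet w (priorityRay p)) :
    z.1 + z.2 = S6 ∧
    Xor' (z.1 = D4 ∧ D4 < p * S6 ∧ z.2 = S6 - D4 ∧ (1 - p) * S6 < z.2)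
         (z.2 = D5 ∧ D5 < (1 - p) * S6 ∧ z.1 = S6 - D5 ∧ p * S6 < z.1) := by
  rw [mergeOmega_eq hD4 hD5 hS6 hsum.le] at hz hmin
  obtain ⟨⟨hz1, hz1D, hz2, hz2D, -⟩, hzS⟩ := hz
  have hclose : ∀ w ∈ mergeK D4 D5 S6, w.1 + w.2 = S6 → |z.1 - p * S6| ≤ |w.1 - p * S6| := by
    intro w hw hwS
    have h := hmin w ⟨hw, hwS⟩
    rwa [euclDistToSet_priorityRay_of_add_eq hp0.le hp1.le hz1 hz2 hzS,
      euclDistToSet_priorityRay_of_add_eq hp0.le hp1.le hw.1 hw.2.2.1 hwS,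
      div_le_div_iff_of_pos_right (by positivity)] at h
  have hexcl : ¬ (D4 < p * S6 ∧ D5 < (1 - p) * S6) := fun h => by linarith
  have hpS6 : p * S6 ≤ S6 := mul_le_of_le_one_left hS6 hp1.le
  have hpS6' : 0 ≤ p * S6 := mul_nonneg hp0.le hS6
  refine ⟨hzS, ?_⟩
  rcases hinfeas with h4 | h5
  · have hz1 : z.1 = D4 := by
      have h := hclose (D4, S6 - D4) ⟨hD4, le_rfl, by linarith, by linarith, by simp⟩ (by ring)
      rw [abs_of_neg (by linarith), abs_of_neg (by linarith : D4 - p * S6 < 0)] at h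
      linarith
    exact Or.inl ⟨⟨hz1, h4, by linarith, by linarith⟩, fun h => hexcl ⟨h4, h.2.1⟩⟩
  · have hz2 : z.2 = D5 := by
      have h := hclose (S6 - D5, D5) ⟨by linarith, by linarith, hD5, le_rfl, by simp⟩ (by ring)
      rw [abs_of_pos (by linarith), abs_of_pos (by linarith : 0 < S6 - D5 - p * S6)] at h
      linarith
    exact Or.inr ⟨⟨hz2, h5, by linarith, by linarith⟩, fun h => hexcl ⟨h.2.1, h5⟩⟩
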